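/- arXiv:2605.12893 — 6 statements merged into one kernel-verified Lean document; each statement's English description precedes it below -/
import Mathlib

section
/- Constant stack construction: for any LFPL element type A and any c ∈ ℕ, there exists a 0-stack implementation with element type A that is correct and bounded by the constant function B(n) = c; its underlying type is the c-fold tensor (1+A)^c. -/
/-! # LFPL: syntax and denotational semantics -/

/-- LFPL types: diamond, unit, sums, tensor products, linear functions, lists. -/
inductive Tp : Type
  | dia : Tp
  | unit : Tp
  | sum (A B : Tp) : Tp
  | tens (A B : Tp) : Tp
  | arr (A B : Tp) : Tp
  | list (A : Tp) : Tp

/-- Typing contexts: a list of declarations; `none` marks an unusable slot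
(used for context splitting in the affine type system). -/
abbrev Ctx := List (Option Tp)

/-- De Bruijn variable lookup. -/
inductive Lk : Ctx → Tp → Type
  | here {A : Tp} {G : Ctx} : Lk (some A :: G) A
  | there {o : Option Tp} {A : Tp} {G : Ctx} : Lk G A → Lk (o :: G) A

/-- Splitting a context into two halves (each declared variable is usable
in exactly one half): this enforces the affine discipline. -/
inductive Split : Ctx → Ctx → Ctx → Type
  | nil : Split [] [] []
  | skip {G G1 G2} : Split G G1 G2 → Split (none :: G) (none :: G1) (none :: G2)
  | left {A : Tp} {G G1 G2} : Split G G1 G2 → Split (some A :: G) (some A :: G1) (none :: G2)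
  | right {A : Tp} {G G1 G2} : Split G G1 G2 → Split (some A :: G) (none :: G1) (some A :: G2)

/-- Intrinsically typed LFPL terms: `Term G A` are the terms `M` with `G ⊢ M : A`. -/
inductive Term : Ctx → Tp → Type
  | var {G A} : Lk G A → Term G A
  | null {G} : Term G .unit
  | inj1 {G A B} : Term G A → Term G (.sum A B)
  | inj2 {G A B} : Term G B → Term G (.sum A B)
  | scase {G G1 G2 A B C} : Split G G1 G2 → Term G1 (.sum A B) →
      Term (some A :: G2) C → Term (some B :: G2) C → Term G C
  | pair {G G1 G2 A B} : Split G G1 G2 → Term G1 A → Term G2 B → Term G (.tens A B)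
  | letp {G G1 G2 A B C} : Split G G1 G2 → Term G1 (.tens A B) →
      Term (some B :: some A :: G2) C → Term G C
  | lam {G A B} : Term (some A :: G) B → Term G (.arr A B)
  | app {G G1 G2 A B} : Split G G1 G2 → Term G1 (.arr A B) → Term G2 A → Term G B
  | nil {G A} : Term G (.list A)
  | cons {G G1 G23 G2 G3 A} : Split G G1 G23 → Split G23 G2 G3 →
      Term G1 .dia → Term G2 A → Term G3 (.list A) → Term G (.list A)
  | lrec {G G1 G2 A B} : Split G G1 G2 → Term G1 (.list A) → Term G2 B →
      Term [some B, some A, some .dia] B → Term G B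

/-- Set-theoretic denotational semantics of types. -/
def Tp.sem : Tp → Type
  | .dia => Unit
  | .unit => Unit
  | .sum A B => A.sem ⊕ B.sem
  | .tens A B => A.sem × B.sem
  | .arr A B => A.sem → B.sem
  | .list A => List A.sem

/-- Denotation of contexts (environments of semantic values). -/
def CtxSem : Ctx → Type
  | [] => PUnit
  | some A :: G => Tp.sem A × CtxSem G
  | none :: G => CtxSem G

def Lk.sem : {G : Ctx} → {A : Tp} → Lk G A → CtxSem G → Tp.sem A
  | some _ :: _, _, .here, η => η.1
  | some _ :: _, _, .there l, η => Lk.sem l η.2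
  | none :: _, _, .there l, η => Lk.sem l η

def Split.sub1 : {G G1 G2 : Ctx} → Split G G1 G2 → CtxSem G → CtxSem G1
  | _, _, _, .nil, _ => PUnit.unit
  | _, _, _, .skip s, η => s.sub1 η
  | _, _, _, .left s, η => (η.1, s.sub1 η.2)
  | _, _, _, .right s, η => s.sub1 η.2

def Split.sub2 : {G G1 G2 : Ctx} → Split G G1 G2 → CtxSem G → CtxSem G2
  | _, _, _, .nil, _ => PUnit.unit
  | _, _, _, .skip s, η => s.sub2 η
  | _, _, _, .left s, η => s.sub2 η.2
  | _, _, _, .right s, η => (η.1, s.sub2 η.2)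

/-- Denotational semantics of terms.  The `cons` case ignores its diamond
argument, and the list recursor is interpreted by iteration over sequences. -/
def Term.sem : {G : Ctx} → {A : Tp} → Term G A → CtxSem G → Tp.sem A
  | _, _, .var l, η => l.sem η
  | _, _, .null, _ => ()
  | _, _, .inj1 M, η => Sum.inl (M.sem η)
  | _, _, .inj2 M, η => Sum.inr (M.sem η)
  | _, _, .scase s M N1 N2, η =>
      match M.sem (s.sub1 η) with
      | Sum.inl a => N1.sem (a, s.sub2 η)
      | Sum.inr b => N2.sem (b, s.sub2 η)
  | _, _, .pair s M1 M2, η => (M1.sem (s.sub1 η), M2.sem (s.sub2 η))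
  | _, _, .letp s M N, η => N.sem ((M.sem (s.sub1 η)).2, ((M.sem (s.sub1 η)).1, s.sub2 η))
  | _, _, .lam M, η => fun a => M.sem (a, η)
  | _, _, .app s M N, η => M.sem (s.sub1 η) (N.sem (s.sub2 η))
  | _, _, .nil, _ => []
  | _, _, .cons s1 s2 _ Mh Mt, η =>
      Mh.sem (s2.sub1 (s1.sub2 η)) :: Mt.sem (s2.sub2 (s1.sub2 η))
  | _, _, .lrec s M N1 N2, η =>
      (M.sem (s.sub1 η)).foldr (fun a b => N2.sem (b, (a, ((), PUnit.unit)))) (N1.sem (s.sub2 η))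

/-- Diamond-free types. -/
inductive DFree : Tp → Prop
  | unit : DFree .unit
  | sum {A B : Tp} : DFree A → DFree B → DFree (.sum A B)
  | tens {A B : Tp} : DFree A → DFree B → DFree (.tens A B)
/-! # Bounded stacks -/

/-- The type `L(1)` of unit lists (pools of diamonds). -/
def unitL : Tp := .list .unit

/-- `k`-fold tensor power of a type (with `T^0 = 1`). -/
def tpow (T : Tp) : ℕ → Tp
  | 0 => .unit
  | k + 1 => .tens T (tpow T k)

/-- `(L(1))^k`, the `k`-fold tensor of `L(1)`. -/
abbrev dpow (k : ℕ) : Tp := tpow unitL k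

/-- `m_{n,k} ∈ ⟦(L(1))^k⟧`: the `k`-tuple of length-`n` unit sequences. -/
def mnk (n : ℕ) : (k : ℕ) → (dpow k).sem
  | 0 => ()
  | k + 1 => (List.replicate n (), mnk n k)

/-- A `k`-stack implementation with element type `A`: a type `S` together with
closed terms `empty`, `push` and `pop` of the appropriate types. -/
structure StackImpl (A : Tp) (k : ℕ) where
  S : Tp
  empty : Term [] S
  push : Term [] (.arr (dpow k) (.arr (.tens A S) (.tens (dpow k) (.tens S (.sum A .unit)))))
  pop : Term [] (.arr (dpow k) (.arr S (.tens (dpow k) (.tens S (.sum .unit A)))))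

/-- Correctness of a `k`-stack implementation, bounded by `B : ℕ → ℕ`:
for each `n` there are valid states `valid n` and item lists `items n` such that
`empty` is valid with no items, `push` fails exactly on full stacks and otherwise
prepends the element, and `pop` fails exactly on empty stacks and otherwise
returns the head; both operations return `m_{n,k}`. -/
structure StackCorrect {A : Tp} {k : ℕ} (imp : StackImpl A k) (B : ℕ → ℕ) where
  valid : ℕ → imp.S.sem → Prop
  items : ℕ → imp.S.sem → List A.sem
  empty_valid : ∀ n, valid n (imp.empty.sem PUnit.unit)
  empty_items : ∀ n, items n (imp.empty.sem PUnit.unit) = []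
  push_full : ∀ (n : ℕ) (x : A.sem) (s : imp.S.sem), valid n s →
    (items n s).length = B n →
    imp.push.sem PUnit.unit (mnk n k) (x, s) = (mnk n k, (s, Sum.inl x))
  push_succ : ∀ (n : ℕ) (x : A.sem) (s : imp.S.sem), valid n s →
    (items n s).length < B n →
    ∃ s', imp.push.sem PUnit.unit (mnk n k) (x, s) = (mnk n k, (s', Sum.inr ())) ∧
      valid n s' ∧ items n s' = x :: items n s
  pop_empty : ∀ (n : ℕ) (s : imp.S.sem), valid n s → items n s = [] →
    imp.pop.sem PUnit.unit (mnk n k) s = (mnk n k, (s, Sum.inl ()))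
  pop_succ : ∀ (n : ℕ) (s : imp.S.sem) (x : A.sem) (l : List A.sem), valid n s →
    items n s = x :: l →
    ∃ s', imp.pop.sem PUnit.unit (mnk n k) s = (mnk n k, (s', Sum.inr x)) ∧
      valid n s' ∧ items n s' = l

/-!
The state is a row of `c` slots of type `1 + A`; the occupied slots form a prefix and hold the
stack from the bottom up. Push fills the first free slot and fails when there is none; pop empties
the last occupied slot. Both are defined by recursion on `c`: the operation on `c + 1` slots
inspects the first slot and otherwise hands the rest of the row to the operation on `c` slots,
which enters the closed LFPL term as an ordinary (affinely used) function argument. A constant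
capacity needs no diamonds, so the pools are passed through unchanged. Correctness is proved for
the underlying set-theoretic functions, by the same recursion.
-/

structure IsBoundedStack {α σ : Type} (empty : σ) (push : α × σ → σ × (α ⊕ Unit))
    (pop : σ → σ × (Unit ⊕ α)) (valid : σ → Prop) (items : σ → List α) (bound : ℕ) : Prop where
  empty_valid : valid empty
  empty_items : items empty = []
  push_full : ∀ x s, valid s → (items s).length = bound → push (x, s) = (s, .inl x)
  push_succ : ∀ x s, valid s → (items s).length < bound →
    ∃ s', push (x, s) = (s', .inr ()) ∧ valid s' ∧ items s' = x :: items s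
  pop_empty : ∀ s, valid s → items s = [] → pop s = (s, .inl ())
  pop_succ : ∀ s x l, valid s → items s = x :: l →
    ∃ s', pop s = (s', .inr x) ∧ valid s' ∧ items s' = l

/-- `λ f. λ m. λ x. (m, f x)` -/
def threadPoolTerm (P X Y : Tp) : Term [] (.arr (.arr X Y) (.arr P (.arr X (.tens P Y)))) :=
  .lam <| .lam <| .lam <| .pair (.right (.left (.right .nil))) (.var (.there .here))
    (.app (.right (.skip (.left .nil))) (.var (.there (.there .here))) (.var .here))

def StackImpl.ofPoolFree {A S : Tp} (k : ℕ) (empty : Term [] S)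
    (push : Term [] (.arr (.tens A S) (.tens S (.sum A .unit))))
    (pop : Term [] (.arr S (.tens S (.sum .unit A)))) : StackImpl A k where
  S := S
  empty := empty
  push := .app .nil (threadPoolTerm _ _ _) push
  pop := .app .nil (threadPoolTerm _ _ _) pop

theorem IsBoundedStack.nonempty_stackCorrect_ofPoolFree {A S : Tp} {k bound : ℕ}
    {empty : Term [] S} {push : Term [] (.arr (.tens A S) (.tens S (.sum A .unit)))}
    {pop : Term [] (.arr S (.tens S (.sum .unit A)))} {valid : S.sem → Prop}
    {items : S.sem → List A.sem}
    (h : IsBoundedStack (empty.sem PUnit.unit) (push.sem PUnit.unit) (pop.sem PUnit.unit)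
      valid items bound) :
    Nonempty (StackCorrect (StackImpl.ofPoolFree k empty push pop) fun _ => bound) :=
  ⟨{ valid := fun _ => valid
     items := fun _ => items
     empty_valid := fun _ => h.empty_valid
     empty_items := fun _ => h.empty_items
     push_full := fun n x s hs hlen => congrArg (Prod.mk (mnk n k)) (h.push_full x s hs hlen)
     push_succ := fun n x s hs hlen => (h.push_succ x s hs hlen).imp
       fun _ ⟨hpush, hs', hitems⟩ => ⟨congrArg (Prod.mk (mnk n k)) hpush, hs', hitems⟩
     pop_empty := fun n s hs hnil => congrArg (Prod.mk (mnk n k)) (h.pop_empty s hs hnil)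
     pop_succ := fun n s x l hs hitems => (h.pop_succ s x l hs hitems).imp
       fun _ ⟨hpop, hs', hitems'⟩ => ⟨congrArg (Prod.mk (mnk n k)) hpop, hs', hitems'⟩ }⟩

theorem isBoundedStack_unit {α : Type} :
    IsBoundedStack (α := α) () (fun p => (p.2, .inl p.1)) (fun s => (s, .inl ()))
      (fun _ => True) (fun _ => []) 0 where
  empty_valid := trivial
  empty_items := rfl
  push_full _ _ _ _ := rfl
  push_succ _ _ _ h := absurd h (Nat.not_lt_zero _)
  pop_empty _ _ _ := rfl
  pop_succ _ _ _ _ h := (List.cons_ne_nil _ _ h.symm).elim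

section Slot

variable {α σ : Type}

def slotItems (items : σ → List α) : (Unit ⊕ α) × σ → List α
  | (.inl _, _) => []
  | (.inr y, t) => items t ++ [y]

def slotValid (valid : σ → Prop) (items : σ → List α) : (Unit ⊕ α) × σ → Prop
  | (.inl _, t) => items t = [] ∧ valid t
  | (.inr _, t) => valid t

def slotPush (push : α × σ → σ × (α ⊕ Unit)) :
    α × (Unit ⊕ α) × σ → ((Unit ⊕ α) × σ) × (α ⊕ Unit)
  | (x, .inl _, t) => ((.inr x, t), .inr ())
  | (x, .inr y, t) => ((.inr y, (push (x, t)).1), (push (x, t)).2)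

def slotPop (pop : σ → σ × (Unit ⊕ α)) : (Unit ⊕ α) × σ → ((Unit ⊕ α) × σ) × (Unit ⊕ α)
  | (.inl _, t) => ((.inl (), t), .inl ())
  | (.inr y, t) =>
    match (pop t).2 with
    | .inl _ => ((.inl (), (pop t).1), .inr y)
    | .inr x => ((.inr y, (pop t).1), .inr x)

variable {empty : σ} {push : α × σ → σ × (α ⊕ Unit)} {pop : σ → σ × (Unit ⊕ α)}
  {valid : σ → Prop} {items : σ → List α} {bound : ℕ}

theorem IsBoundedStack.slotPush_full (h : IsBoundedStack empty push pop valid items bound)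
    (x : α) (s : (Unit ⊕ α) × σ) (hs : slotValid valid items s)
    (hlen : (slotItems items s).length = bound + 1) : slotPush push (x, s) = (s, .inl x) := by
  rcases s with ⟨_ | y, t⟩
  · simp [slotItems] at hlen
  · have htail : (items t).length = bound := by simpa [slotItems] using hlen
    simp [slotPush, h.push_full x t hs htail]

theorem IsBoundedStack.slotPush_succ (h : IsBoundedStack empty push pop valid items bound)
    (x : α) (s : (Unit ⊕ α) × σ) (hs : slotValid valid items s)
    (hlen : (slotItems items s).length < bound + 1) :
    ∃ s', slotPush push (x, s) = (s', .inr ()) ∧ slotValid valid items s' ∧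
      slotItems items s' = x :: slotItems items s := by
  rcases s with ⟨_ | y, t⟩
  · obtain ⟨hnil, ht⟩ := hs
    exact ⟨(.inr x, t), rfl, ht, by simp [slotItems, hnil]⟩
  · have htail : (items t).length < bound := by simpa [slotItems] using hlen
    obtain ⟨t', hpush, ht', hitems⟩ := h.push_succ x t hs htail
    exact ⟨(.inr y, t'), by simp [slotPush, hpush], ht', by simp [slotItems, hitems]⟩

theorem slotPop_of_slotItems_eq_nil {s : (Unit ⊕ α) × σ} (hnil : slotItems items s = []) :
    slotPop pop s = (s, .inl ()) := by
  rcases s with ⟨_ | y, t⟩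
  · rfl
  · simp [slotItems] at hnil

theorem IsBoundedStack.slotPop_succ (h : IsBoundedStack empty push pop valid items bound)
    (s : (Unit ⊕ α) × σ) (x : α) (l : List α) (hs : slotValid valid items s)
    (hitems : slotItems items s = x :: l) :
    ∃ s', slotPop pop s = (s', .inr x) ∧ slotValid valid items s' ∧ slotItems items s' = l := by
  rcases s with ⟨_ | y, t⟩
  · simp [slotItems] at hitems
  · change items t ++ [y] = x :: l at hitems
    rcases htail : items t with _ | ⟨x', l'⟩
    · obtain ⟨rfl, rfl⟩ : y = x ∧ [] = l := by simpa [htail] using hitems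
      exact ⟨(.inl (), t), by simp [slotPop, h.pop_empty t hs htail], ⟨htail, hs⟩, rfl⟩
    · obtain ⟨rfl, rfl⟩ : x' = x ∧ l' ++ [y] = l := by simpa [htail] using hitems
      obtain ⟨t', hpop, ht', hitems'⟩ := h.pop_succ t x' l' hs htail
      exact ⟨(.inr y, t'), by simp [slotPop, hpop], ht', by simp [slotItems, hitems']⟩

theorem IsBoundedStack.slot (h : IsBoundedStack empty push pop valid items bound) :
    IsBoundedStack ((.inl (), empty) : (Unit ⊕ α) × σ) (slotPush push) (slotPop pop)
      (slotValid valid items) (slotItems items) (bound + 1) where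
  empty_valid := ⟨h.empty_items, h.empty_valid⟩
  empty_items := rfl
  push_full := h.slotPush_full
  push_succ := h.slotPush_succ
  pop_empty _ _ hnil := slotPop_of_slotItems_eq_nil hnil
  pop_succ := h.slotPop_succ

end Slot

section Terms

variable (A S : Tp)

/-- `λ f. λ (x, (h, t)). case h of inl _ ⇒ ((inr x, t), inr ())
      | inr y ⇒ let (t', r) = f (x, t) in ((inr y, t'), r)` -/
def slotPushTerm :
    Term [] (.arr (.arr (.tens A S) (.tens S (.sum A .unit)))
      (.arr (.tens A (.tens (.sum .unit A) S)) (.tens (.tens (.sum .unit A) S) (.sum A .unit)))) :=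
  .lam <| .lam <| .letp (.left (.right .nil)) (.var .here) <|
    .letp (.left (.right (.skip (.right .nil)))) (.var .here) <|
    .scase (.right (.left (.skip (.right (.skip (.right .nil)))))) (.var (.there .here))
      (.pair (.right (.left (.skip (.skip (.left (.skip (.right .nil)))))))
        (.pair (.skip (.right (.skip (.skip (.left (.skip (.skip .nil)))))))
          (.inj2 (.var (.there (.there (.there (.there .here))))))
          (.var (.there .here)))
        (.inj2 .null))
      (.letp (.right (.left (.skip (.skip (.left (.skip (.left .nil)))))))
        (.app (.skip (.right (.skip (.skip (.right (.skip (.left .nil)))))))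
          (.var (.there (.there (.there (.there (.there (.there .here)))))))
          (.pair (.skip (.right (.skip (.skip (.left (.skip (.skip .nil)))))))
            (.var (.there (.there (.there (.there .here)))))
            (.var (.there .here))))
        (.pair (.right (.left (.left (.skip (.skip (.skip (.skip (.skip (.skip .nil)))))))))
          (.pair (.skip (.right (.left (.skip (.skip (.skip (.skip (.skip (.skip .nil)))))))))
            (.inj2 (.var (.there (.there .here))))
            (.var (.there .here)))
          (.var .here)))

/-- `λ g. λ (h, t). case h of inl _ ⇒ ((inl (), t), inl ())
      | inr y ⇒ let (t', r) = g t in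
          case r of inl _ ⇒ ((inl (), t'), inr y) | inr x ⇒ ((inr y, t'), inr x)` -/
def slotPopTerm :
    Term [] (.arr (.arr S (.tens S (.sum .unit A)))
      (.arr (.tens (.sum .unit A) S) (.tens (.tens (.sum .unit A) S) (.sum .unit A)))) :=
  .lam <| .lam <| .letp (.left (.right .nil)) (.var .here) <|
    .scase (.right (.left (.skip (.right .nil)))) (.var (.there .here))
      (.pair (.right (.left (.skip (.skip (.right .nil)))))
        (.pair (.skip (.right (.skip (.skip (.skip .nil))))) (.inj1 .null) (.var (.there .here)))
        (.inj1 .null))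
      (.letp (.right (.left (.skip (.skip (.left .nil)))))
        (.app (.skip (.right (.skip (.skip (.left .nil)))))
          (.var (.there (.there (.there (.there .here)))))
          (.var (.there .here)))
        (.scase (.left (.right (.right (.skip (.skip (.skip (.skip .nil))))))) (.var .here)
          (.pair (.right (.skip (.left (.right (.skip (.skip (.skip (.skip .nil))))))))
            (.pair (.skip (.skip (.right (.skip (.skip (.skip (.skip (.skip .nil))))))))
              (.inj1 .null) (.var (.there (.there .here))))
            (.inj2 (.var (.there (.there (.there .here))))))
          (.pair (.right (.skip (.left (.left (.skip (.skip (.skip (.skip .nil))))))))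
            (.pair (.skip (.skip (.right (.left (.skip (.skip (.skip (.skip .nil))))))))
              (.inj2 (.var (.there (.there (.there .here))))) (.var (.there (.there .here))))
            (.inj2 (.var .here)))))

theorem slotPushTerm_sem : (slotPushTerm A S).sem PUnit.unit = slotPush := by
  funext f p
  rcases p with ⟨x, _ | y, t⟩ <;> rfl

theorem slotPopTerm_sem : (slotPopTerm A S).sem PUnit.unit = slotPop := by
  funext g s
  rcases s with ⟨_ | y, t⟩
  · rfl
  · -- `Term.sem` of a `scase` does not reduce on a variable discriminant: split the matches
    simp only [slotPopTerm, Term.sem, Split.sub1, Split.sub2]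
    split
    · rename_i hslot
      exact absurd hslot Sum.inr_ne_inl
    · rename_i b hslot
      obtain rfl : y = b := Sum.inr.inj hslot
      split <;> rename_i hr <;> simp only [slotPop, show (g t).2 = _ from hr] <;> rfl

end Terms

def slotsEmptyTerm (A : Tp) : (c : ℕ) → Term [] (tpow (.sum .unit A) c)
  | 0 => .null
  | c + 1 => .pair .nil (.inj1 .null) (slotsEmptyTerm A c)

def slotsPushTerm (A : Tp) : (c : ℕ) →
    Term [] (.arr (.tens A (tpow (.sum .unit A) c)) (.tens (tpow (.sum .unit A) c) (.sum A .unit)))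
  | 0 => .lam <| .letp (.left .nil) (.var .here) <|
      .pair (.left (.right (.skip .nil))) (.var .here) (.inj1 (.var (.there .here)))
  | c + 1 => .app .nil (slotPushTerm A _) (slotsPushTerm A c)

def slotsPopTerm (A : Tp) : (c : ℕ) →
    Term [] (.arr (tpow (.sum .unit A) c) (.tens (tpow (.sum .unit A) c) (.sum .unit A)))
  | 0 => .lam <| .pair (.left .nil) (.var .here) (.inj1 .null)
  | c + 1 => .app .nil (slotPopTerm A _) (slotsPopTerm A c)

def slotsItems (A : Tp) : (c : ℕ) → (tpow (.sum .unit A) c).sem → List A.sem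
  | 0 => fun _ => []
  | c + 1 => slotItems (slotsItems A c)

def slotsValid (A : Tp) : (c : ℕ) → (tpow (.sum .unit A) c).sem → Prop
  | 0 => fun _ => True
  | c + 1 => slotValid (slotsValid A c) (slotsItems A c)

theorem isBoundedStack_slots (A : Tp) (c : ℕ) :
    IsBoundedStack ((slotsEmptyTerm A c).sem PUnit.unit) ((slotsPushTerm A c).sem PUnit.unit)
      ((slotsPopTerm A c).sem PUnit.unit) (slotsValid A c) (slotsItems A c) c := by
  induction c with
  | zero => exact isBoundedStack_unit
  | succ c ih =>
    have hpush : (slotsPushTerm A (c + 1)).sem PUnit.unit =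
        slotPush ((slotsPushTerm A c).sem PUnit.unit) :=
      congrFun (slotPushTerm_sem A _) _
    have hpop : (slotsPopTerm A (c + 1)).sem PUnit.unit =
        slotPop ((slotsPopTerm A c).sem PUnit.unit) :=
      congrFun (slotPopTerm_sem A _) _
    rw [hpush, hpop]
    exact ih.slot

/-- **Constant stack construction**: for any element type `A` and `c ∈ ℕ`,
there is a `0`-stack implementation with element type `A`, whose underlying
type is the `c`-fold tensor `(1 + A)^c`, that is correct and bounded by the
constant function `B(n) = c`. -/
theorem constant_stack_construction (A : Tp) (c : ℕ) :
    ∃ imp : StackImpl A 0,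
      imp.S = tpow (.sum .unit A) c ∧
      Nonempty (StackCorrect imp fun _ => c) :=
  ⟨.ofPoolFree 0 (slotsEmptyTerm A c) (slotsPushTerm A c) (slotsPopTerm A c), rfl,
    (isBoundedStack_slots A c).nonempty_stackCorrect_ofPoolFree⟩
end

section
/- Additive stack construction: fix an LFPL element type A and k ∈ ℕ. If for i ∈ {1,2} there is a k-stack implementation with element type A, underlying type S_i, that is correct and bounded by B_i : ℕ → ℕ, then there is a k-stack implementation with element type A and underlying type S₁ ⊗ S₂ that is correct and bounded by B(n) = B₁(n) + B₂(n). -/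
/-!
The combined stack `(s₁, s₂)` holds the items of `s₁` followed by those of `s₂`, and is kept in a
shape where `s₁` is empty unless `s₂` is full. So `push` tries `s₂` first and hands a rejected
element on to `s₁`, while `pop` tries `s₁` first and falls back to `s₂`; both run the component
operations in sequence, threading the diamond pool `m_{n,k}` through them unchanged.
-/

section Semantics

variable {D X S₁ S₂ : Type*}

def pushBoth (push₁ : D → X × S₁ → D × (S₁ × (X ⊕ Unit)))
    (push₂ : D → X × S₂ → D × (S₂ × (X ⊕ Unit))) (d : D) :
    X × (S₁ × S₂) → D × ((S₁ × S₂) × (X ⊕ Unit))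
  | (x, (s₁, s₂)) =>
    let r₂ := push₂ d (x, s₂)
    match r₂.2.2 with
    | .inl x =>
      let r₁ := push₁ r₂.1 (x, s₁)
      (r₁.1, ((r₁.2.1, r₂.2.1), r₁.2.2))
    | .inr _ => (r₂.1, ((s₁, r₂.2.1), .inr ()))

def popBoth (pop₁ : D → S₁ → D × (S₁ × (Unit ⊕ X)))
    (pop₂ : D → S₂ → D × (S₂ × (Unit ⊕ X))) (d : D) :
    S₁ × S₂ → D × ((S₁ × S₂) × (Unit ⊕ X))
  | (s₁, s₂) =>
    let r₁ := pop₁ d s₁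
    match r₁.2.2 with
    | .inl _ =>
      let r₂ := pop₂ r₁.1 s₂
      (r₂.1, ((r₁.2.1, r₂.2.1), r₂.2.2))
    | .inr x => (r₁.1, ((r₁.2.1, s₂), .inr x))

variable {push₁ : D → X × S₁ → D × (S₁ × (X ⊕ Unit))} {push₂ : D → X × S₂ → D × (S₂ × (X ⊕ Unit))}
  {pop₁ : D → S₁ → D × (S₁ × (Unit ⊕ X))} {pop₂ : D → S₂ → D × (S₂ × (Unit ⊕ X))}
  {d d' d'' : D} {x x' : X} {s₁ s₁' : S₁} {s₂ s₂' : S₂}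

theorem pushBoth_of_inl {r : X ⊕ Unit} (h₂ : push₂ d (x, s₂) = (d', (s₂', .inl x')))
    (h₁ : push₁ d' (x', s₁) = (d'', (s₁', r))) :
    pushBoth push₁ push₂ d (x, (s₁, s₂)) = (d'', ((s₁', s₂'), r)) := by
  simp [pushBoth, h₁, h₂]

theorem pushBoth_of_inr (h₂ : push₂ d (x, s₂) = (d', (s₂', .inr ()))) :
    pushBoth push₁ push₂ d (x, (s₁, s₂)) = (d', ((s₁, s₂'), .inr ())) := by
  simp [pushBoth, h₂]

theorem popBoth_of_inl {r : Unit ⊕ X} (h₁ : pop₁ d s₁ = (d', (s₁', .inl ())))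
    (h₂ : pop₂ d' s₂ = (d'', (s₂', r))) :
    popBoth pop₁ pop₂ d (s₁, s₂) = (d'', ((s₁', s₂'), r)) := by
  simp [popBoth, h₁, h₂]

theorem popBoth_of_inr (h₁ : pop₁ d s₁ = (d', (s₁', .inr x))) :
    popBoth pop₁ pop₂ d (s₁, s₂) = (d', ((s₁', s₂), .inr x)) := by
  simp [popBoth, h₁]

end Semantics

namespace StackImpl

section Terms

variable (A : Tp) (k : ℕ) (S₁ S₂ : Tp)

abbrev PushTy (S : Tp) : Tp :=
  .arr (dpow k) (.arr (.tens A S) (.tens (dpow k) (.tens S (.sum A .unit))))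

abbrev PopTy (S : Tp) : Tp :=
  .arr (dpow k) (.arr S (.tens (dpow k) (.tens S (.sum .unit A))))

/-- `pushBoth` in de Bruijn form, with the two component pushes as free variables. -/
def pushBothTerm : Term [some (PushTy A k S₂), some (PushTy A k S₁)] (PushTy A k (.tens S₁ S₂)) :=
  .lam (.lam <|
    .letp (.left (.right (.right (.right .nil)))) (.var .here) <|
    .letp (.left (.right (.skip (.right (.right (.right .nil)))))) (.var .here) <|
    .letp (.left (.right (.skip (.left (.skip (.left (.left (.right .nil))))))))
      (.app (.right (.skip (.skip (.right (.skip (.left (.left (.skip .nil))))))))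
        (.app (.skip (.skip (.skip (.skip (.skip (.right (.left (.skip .nil))))))))
          (.var (.there (.there (.there (.there (.there (.there .here)))))))
          (.var (.there (.there (.there (.there (.there .here)))))))
        (.pair (.right (.skip (.skip (.left (.skip (.skip (.skip (.skip .nil))))))))
          (.var (.there (.there (.there .here))))
          (.var .here))) <|
    .letp (.left (.right (.skip (.right (.skip (.skip (.skip (.skip (.skip (.right .nil))))))))))
      (.var .here) <|
    .scase (.left (.right (.skip (.right (.skip (.right (.skip (.skip (.skip (.skip (.skip (.right .nil))))))))))))
      (.var .here)
      (.letp (.left (.skip (.right (.skip (.left (.skip (.left (.skip (.skip (.skip (.skip (.skip (.left .nil)))))))))))))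
        (.app (.right (.skip (.skip (.skip (.left (.skip (.right (.skip (.skip (.skip (.skip (.skip (.left .nil)))))))))))))
          (.app (.skip (.skip (.skip (.skip (.right (.skip (.skip (.skip (.skip (.skip (.skip (.skip (.left .nil)))))))))))))
            (.var (.there (.there (.there (.there (.there (.there (.there (.there (.there (.there (.there (.there .here)))))))))))))
            (.var (.there (.there (.there (.there .here))))))
          (.pair (.left (.skip (.skip (.skip (.skip (.skip (.right (.skip (.skip (.skip (.skip (.skip (.skip .nil)))))))))))))
            (.var .here)
            (.var (.there (.there (.there (.there (.there (.there .here)))))))))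
        (.letp (.left (.right (.skip (.skip (.right (.skip (.skip (.skip (.skip (.skip (.skip (.skip (.skip (.skip (.skip .nil)))))))))))))))
          (.var .here) <|
          .pair (.right (.right (.skip (.left (.skip (.skip (.right (.skip (.skip (.skip (.skip (.skip (.skip (.skip (.skip (.skip (.skip .nil)))))))))))))))))
            (.var (.there (.there (.there .here))))
            (.pair (.right (.left (.skip (.skip (.skip (.skip (.left (.skip (.skip (.skip (.skip (.skip (.skip (.skip (.skip (.skip (.skip .nil)))))))))))))))))
              (.pair (.skip (.left (.skip (.skip (.skip (.skip (.right (.skip (.skip (.skip (.skip (.skip (.skip (.skip (.skip (.skip (.skip .nil)))))))))))))))))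
                (.var (.there .here))
                (.var (.there (.there (.there (.there (.there (.there .here))))))))
              (.var .here))))
      (.pair (.right (.skip (.right (.skip (.left (.skip (.right (.skip (.skip (.skip (.skip (.skip (.right .nil)))))))))))))
        (.var (.there (.there (.there (.there .here)))))
        (.pair (.left (.skip (.left (.skip (.skip (.skip (.left (.skip (.skip (.skip (.skip (.skip (.left .nil)))))))))))))
          (.pair (.right (.skip (.right (.skip (.skip (.skip (.left (.skip (.skip (.skip (.skip (.skip (.right .nil)))))))))))))
            (.var (.there (.there (.there (.there (.there (.there .here)))))))
            (.var (.there (.there .here))))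
          (.inj2 .null))))


/-- `popBoth` in de Bruijn form, with the two component pops as free variables. -/
def popBothTerm : Term [some (PopTy A k S₂), some (PopTy A k S₁)] (PopTy A k (.tens S₁ S₂)) :=
  .lam (.lam <|
    .letp (.left (.right (.right (.right .nil)))) (.var .here) <|
    .letp (.right (.left (.skip (.left (.right (.left .nil))))))
      (.app (.skip (.right (.skip (.left (.skip (.left .nil))))))
        (.app (.skip (.skip (.skip (.right (.skip (.left .nil))))))
          (.var (.there (.there (.there (.there (.there .here))))))
          (.var (.there (.there (.there .here)))))
        (.var (.there .here))) <|
    .letp (.left (.right (.right (.skip (.skip (.skip (.right (.skip .nil))))))))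
      (.var .here) <|
    .scase (.left (.right (.skip (.right (.right (.skip (.skip (.skip (.right (.skip .nil))))))))))
      (.var .here)
      (.letp (.right (.skip (.right (.skip (.left (.left (.skip (.skip (.skip (.left (.skip .nil)))))))))))
        (.app (.skip (.skip (.skip (.skip (.left (.right (.skip (.skip (.skip (.left (.skip .nil)))))))))))
          (.app (.skip (.skip (.skip (.skip (.right (.skip (.skip (.skip (.skip (.left (.skip .nil)))))))))))
            (.var (.there (.there (.there (.there (.there (.there (.there (.there (.there .here))))))))))
            (.var (.there (.there (.there (.there .here))))))
          (.var (.there (.there (.there (.there (.there .here)))))))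
        (.letp (.left (.right (.right (.skip (.right (.skip (.skip (.skip (.skip (.skip (.skip (.skip (.skip .nil)))))))))))))
          (.var .here) <|
          .pair (.right (.right (.skip (.left (.right (.skip (.right (.skip (.skip (.skip (.skip (.skip (.skip (.skip (.skip .nil)))))))))))))))
            (.var (.there (.there (.there .here))))
            (.pair (.right (.left (.skip (.skip (.left (.skip (.left (.skip (.skip (.skip (.skip (.skip (.skip (.skip (.skip .nil)))))))))))))))
              (.pair (.skip (.right (.skip (.skip (.right (.skip (.left (.skip (.skip (.skip (.skip (.skip (.skip (.skip (.skip .nil)))))))))))))))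
                (.var (.there (.there (.there (.there (.there (.there .here)))))))
                (.var (.there .here)))
              (.var .here))))
      (.pair (.right (.skip (.right (.skip (.left (.right (.skip (.skip (.skip (.right (.skip .nil)))))))))))
        (.var (.there (.there (.there (.there .here)))))
        (.pair (.right (.skip (.left (.skip (.skip (.left (.skip (.skip (.skip (.left (.skip .nil)))))))))))
          (.pair (.skip (.skip (.left (.skip (.skip (.right (.skip (.skip (.skip (.right (.skip .nil)))))))))))
            (.var (.there (.there .here)))
            (.var (.there (.there (.there (.there (.there .here)))))))
          (.inj2 (.var .here)))))

end Terms

variable {A : Tp} {k : ℕ}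

def append (imp1 imp2 : StackImpl A k) : StackImpl A k where
  S := .tens imp1.S imp2.S
  empty := .pair .nil imp1.empty imp2.empty
  push := .app .nil (.app .nil (.lam (.lam (pushBothTerm A k imp1.S imp2.S))) imp1.push) imp2.push
  pop := .app .nil (.app .nil (.lam (.lam (popBothTerm A k imp1.S imp2.S))) imp1.pop) imp2.pop

variable (imp1 imp2 : StackImpl A k)

theorem append_push_sem :
    (imp1.append imp2).push.sem PUnit.unit =
      pushBoth (imp1.push.sem PUnit.unit) (imp2.push.sem PUnit.unit) := by
  funext d ⟨x, s₁, s₂⟩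
  simp only [append, pushBothTerm, Term.sem, Split.sub1, Split.sub2, pushBoth]
  -- both sides branch on the same value, on the left read through `Lk.sem`
  split <;> rename_i h₁ <;> split <;> rename_i h₂ <;> cases h₁.symm.trans h₂ <;> rfl

theorem append_pop_sem :
    (imp1.append imp2).pop.sem PUnit.unit =
      popBoth (imp1.pop.sem PUnit.unit) (imp2.pop.sem PUnit.unit) := by
  funext d ⟨s₁, s₂⟩
  simp only [append, popBothTerm, Term.sem, Split.sub1, Split.sub2, popBoth]
  split <;> rename_i h₁ <;> split <;> rename_i h₂ <;> cases h₁.symm.trans h₂ <;> rfl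

end StackImpl

namespace StackCorrect

variable {A : Tp} {k : ℕ} {imp1 imp2 : StackImpl A k} {B1 B2 : ℕ → ℕ}
  (hC1 : StackCorrect imp1 B1) (hC2 : StackCorrect imp2 B2)

structure AppendValid (n : ℕ) (s₁ : imp1.S.sem) (s₂ : imp2.S.sem) : Prop where
  valid₁ : hC1.valid n s₁
  valid₂ : hC2.valid n s₂
  length_le₁ : (hC1.items n s₁).length ≤ B1 n
  length_le₂ : (hC2.items n s₂).length ≤ B2 n
  full₂_of_ne_nil : hC1.items n s₁ ≠ [] → (hC2.items n s₂).length = B2 n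

def append : StackCorrect (imp1.append imp2) (fun n => B1 n + B2 n) where
  valid n s := hC1.AppendValid hC2 n s.1 s.2
  items n s := hC1.items n s.1 ++ hC2.items n s.2
  empty_valid n := by
    refine ⟨hC1.empty_valid n, hC2.empty_valid n, ?_, ?_, fun h => absurd (hC1.empty_items n) h⟩ <;>
      simp [StackImpl.append, Term.sem, Split.sub1, Split.sub2, hC1.empty_items, hC2.empty_items]
  empty_items n := by
    simp [StackImpl.append, Term.sem, Split.sub1, Split.sub2, hC1.empty_items, hC2.empty_items]
  push_full := by
    rintro n x ⟨s₁, s₂⟩ ⟨h₁, h₂, hle₁, hle₂, -⟩ hlen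
    dsimp only at h₁ h₂ hle₁ hle₂ hlen
    rw [List.length_append] at hlen
    rw [StackImpl.append_push_sem]
    exact pushBoth_of_inl (hC2.push_full n x s₂ h₂ (by omega)) (hC1.push_full n x s₁ h₁ (by omega))
  push_succ := by
    rintro n x ⟨s₁, s₂⟩ ⟨h₁, h₂, hle₁, hle₂, hfull⟩ hlen
    dsimp only at h₁ h₂ hle₁ hle₂ hfull hlen
    rw [List.length_append] at hlen
    rw [StackImpl.append_push_sem]
    by_cases hfull₂ : (hC2.items n s₂).length = B2 n
    · obtain ⟨s₁', hpush, h₁', hitems⟩ := hC1.push_succ n x s₁ h₁ (by omega)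
      refine ⟨(s₁', s₂), pushBoth_of_inl (hC2.push_full n x s₂ h₂ hfull₂) hpush,
        ⟨h₁', h₂, ?_, hle₂, fun _ => hfull₂⟩, by simp [hitems]⟩
      show (hC1.items n s₁').length ≤ B1 n
      rw [hitems, List.length_cons]; omega
    · have hnil : hC1.items n s₁ = [] := not_imp_comm.mp hfull hfull₂
      obtain ⟨s₂', hpush, h₂', hitems⟩ := hC2.push_succ n x s₂ h₂ (by omega)
      refine ⟨(s₁, s₂'), pushBoth_of_inr hpush, ⟨h₁, h₂', hle₁, ?_, fun h => absurd hnil h⟩,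
        by simp [hnil, hitems]⟩
      show (hC2.items n s₂').length ≤ B2 n
      rw [hitems, List.length_cons]; omega
  pop_empty := by
    rintro n ⟨s₁, s₂⟩ ⟨h₁, h₂, -, -, -⟩ hnil
    obtain ⟨hnil₁, hnil₂⟩ := List.append_eq_nil_iff.mp hnil
    rw [StackImpl.append_pop_sem]
    exact popBoth_of_inl (hC1.pop_empty n s₁ h₁ hnil₁) (hC2.pop_empty n s₂ h₂ hnil₂)
  pop_succ := by
    rintro n ⟨s₁, s₂⟩ x l ⟨h₁, h₂, hle₁, hle₂, hfull⟩ hitems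
    dsimp only at h₁ h₂ hle₁ hle₂ hfull hitems
    rw [StackImpl.append_pop_sem]
    rcases hitems₁ : hC1.items n s₁ with _ | ⟨y, t⟩
    · rw [hitems₁, List.nil_append] at hitems
      obtain ⟨s₂', hpop, h₂', hitems₂⟩ := hC2.pop_succ n s₂ x l h₂ hitems
      refine ⟨(s₁, s₂'), popBoth_of_inl (hC1.pop_empty n s₁ h₁ hitems₁) hpop,
        ⟨h₁, h₂', hle₁, ?_, fun h => absurd hitems₁ h⟩, by simp [hitems₁, hitems₂]⟩
      show (hC2.items n s₂').length ≤ B2 n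
      rw [hitems, List.length_cons] at hle₂; rw [hitems₂]; omega
    · rw [hitems₁, List.cons_append] at hitems
      obtain ⟨rfl, rfl⟩ := List.cons.inj hitems
      obtain ⟨s₁', hpop, h₁', hitems₁'⟩ := hC1.pop_succ n s₁ y t h₁ hitems₁
      refine ⟨(s₁', s₂), popBoth_of_inr hpop,
        ⟨h₁', h₂, ?_, hle₂, fun _ => hfull (by simp [hitems₁])⟩, by simp [hitems₁']⟩
      show (hC1.items n s₁').length ≤ B1 n
      rw [hitems₁, List.length_cons] at hle₁; rw [hitems₁']; omega

end StackCorrect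

/-- **Additive stack construction**: from correct `k`-stack implementations
with element type `A`, underlying types `S₁`, `S₂`, bounded by `B₁`, `B₂`,
one obtains a correct `k`-stack implementation with element type `A` and
underlying type `S₁ ⊗ S₂` bounded by `B(n) = B₁(n) + B₂(n)`. -/
theorem additive_stack_construction (A : Tp) (k : ℕ)
    (imp1 imp2 : StackImpl A k) (B1 B2 : ℕ → ℕ)
    (hC1 : StackCorrect imp1 B1) (hC2 : StackCorrect imp2 B2) :
    ∃ imp : StackImpl A k,
      imp.S = .tens imp1.S imp2.S ∧
      Nonempty (StackCorrect imp fun n => B1 n + B2 n) :=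
  ⟨imp1.append imp2, rfl, ⟨hC1.append hC2⟩⟩
end

section
/- Linear iteration in LFPL: let f : (A ⊗ L(1)) ⊸ (A ⊗ L(1)) be a closed LFPL term. Then there exists a closed term f^♯ : (A ⊗ L(1)) ⊸ (A ⊗ L(1)) such that for all x ∈ ⟦A⟧ and n ∈ ⟦L(1)⟧, ⟦f^♯⟧(x, n) = ⟦f⟧^{|n|}(x, n), i.e. the denotation of f is iterated |n| times starting from (x, n). -/
/-! The recursor consumes the list `n`, so it cannot simply iterate `f` on `(x, n)`. Instead it
computes the pair `(f^|n|, n)`: starting from `(id, nil)`, each step precomposes the accumulated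
function with `f` (allowed because `f` is closed) and spends the diamond of the current element to
rebuild the copy of `n`. Applying the first component to `(x, copy of n)` gives the result. -/

open List (replicate)

def Split.replicateNone :
    (n : ℕ) → Split (replicate n none) (replicate n none) (replicate n none)
  | 0 => .nil
  | n + 1 => .skip (Split.replicateNone n)

def CtxSem.truncate {n : ℕ} : {G : Ctx} → CtxSem (G ++ replicate n none) → CtxSem G
  | [], _ => PUnit.unit
  | some _ :: G, η => (η.1, CtxSem.truncate (G := G) η.2)
  | none :: G, η => CtxSem.truncate (G := G) η

def Lk.padRight (n : ℕ) : {G : Ctx} → {A : Tp} → Lk G A → Lk (G ++ replicate n none) A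
  | _, _, .here => .here
  | _, _, .there l => .there (l.padRight n)

def Split.padRight (n : ℕ) : {G G1 G2 : Ctx} → Split G G1 G2 →
    Split (G ++ replicate n none) (G1 ++ replicate n none) (G2 ++ replicate n none)
  | _, _, _, .nil => Split.replicateNone n
  | _, _, _, .skip s => .skip (s.padRight n)
  | _, _, _, .left s => .left (s.padRight n)
  | _, _, _, .right s => .right (s.padRight n)

/-- Weakening at the end of the context: binders extend contexts at the front, so no variable
index has to be shifted. -/
def Term.padRight (n : ℕ) : {G : Ctx} → {A : Tp} → Term G A → Term (G ++ replicate n none) A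
  | _, _, .var l => .var (l.padRight n)
  | _, _, .null => .null
  | _, _, .inj1 M => .inj1 (M.padRight n)
  | _, _, .inj2 M => .inj2 (M.padRight n)
  | _, _, .scase s M N1 N2 => .scase (s.padRight n) (M.padRight n) (N1.padRight n) (N2.padRight n)
  | _, _, .pair s M1 M2 => .pair (s.padRight n) (M1.padRight n) (M2.padRight n)
  | _, _, .letp s M N => .letp (s.padRight n) (M.padRight n) (N.padRight n)
  | _, _, .lam M => .lam (M.padRight n)
  | _, _, .app s M N => .app (s.padRight n) (M.padRight n) (N.padRight n)
  | _, _, .nil => .nil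
  | _, _, .cons s1 s2 Md Mh Mt =>
      .cons (s1.padRight n) (s2.padRight n) (Md.padRight n) (Mh.padRight n) (Mt.padRight n)
  | _, _, .lrec s M N1 N2 => .lrec (s.padRight n) (M.padRight n) (N1.padRight n) N2

theorem Lk.sem_padRight (n : ℕ) : {G : Ctx} → {A : Tp} → (l : Lk G A) →
    (η : CtxSem (G ++ replicate n none)) → (l.padRight n).sem η = l.sem η.truncate
  | some _ :: _, _, .here, _ => rfl
  | some _ :: _, _, .there l, η => l.sem_padRight n η.2
  | none :: _, _, .there l, η => l.sem_padRight n (G := _) η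

theorem Split.truncate_sub1_padRight (n : ℕ) : {G G1 G2 : Ctx} → (s : Split G G1 G2) →
    (η : CtxSem (G ++ replicate n none)) → ((s.padRight n).sub1 η).truncate = s.sub1 η.truncate
  | _, _, _, .nil, _ => rfl
  | _, _, _, .skip s, η => s.truncate_sub1_padRight n (G := _) η
  | _, _, _, .left s, η => congrArg (η.1, ·) (s.truncate_sub1_padRight n η.2)
  | _, _, _, .right s, η => s.truncate_sub1_padRight n η.2

theorem Split.truncate_sub2_padRight (n : ℕ) : {G G1 G2 : Ctx} → (s : Split G G1 G2) →
    (η : CtxSem (G ++ replicate n none)) → ((s.padRight n).sub2 η).truncate = s.sub2 η.truncate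
  | _, _, _, .nil, _ => rfl
  | _, _, _, .skip s, η => s.truncate_sub2_padRight n (G := _) η
  | _, _, _, .left s, η => s.truncate_sub2_padRight n η.2
  | _, _, _, .right s, η => congrArg (η.1, ·) (s.truncate_sub2_padRight n η.2)

theorem Term.sem_padRight (n : ℕ) : {G : Ctx} → {A : Tp} → (M : Term G A) →
    (η : CtxSem (G ++ replicate n none)) → (M.padRight n).sem η = M.sem η.truncate
  | _, _, .var l, η => l.sem_padRight n η
  | _, _, .null, _ => rfl
  | _, _, .inj1 M, η => congrArg Sum.inl (M.sem_padRight n η)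
  | _, _, .inj2 M, η => congrArg Sum.inr (M.sem_padRight n η)
  | _, _, .scase s M N1 N2, η => by
      simp only [Term.padRight, Term.sem, M.sem_padRight, s.truncate_sub1_padRight]
      cases M.sem (s.sub1 η.truncate) with
      | inl a =>
        exact (N1.sem_padRight n _).trans
          (congrArg (N1.sem ⟨a, ·⟩) (s.truncate_sub2_padRight n η))
      | inr b =>
        exact (N2.sem_padRight n _).trans
          (congrArg (N2.sem ⟨b, ·⟩) (s.truncate_sub2_padRight n η))
  | _, _, .pair s M1 M2, η => by
      simp only [Term.padRight, Term.sem, M1.sem_padRight, M2.sem_padRight,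
        s.truncate_sub1_padRight, s.truncate_sub2_padRight]
      rfl
  | _, _, .letp s M N, η => by
      simp only [Term.padRight, Term.sem, M.sem_padRight, s.truncate_sub1_padRight]
      exact (N.sem_padRight n _).trans
        (congrArg (N.sem ⟨_, _, ·⟩) (s.truncate_sub2_padRight n η))
  | _, _, .lam M, η => funext fun a => M.sem_padRight n (a, η)
  | _, _, .app s M N, η => by
      simp only [Term.padRight, Term.sem, M.sem_padRight, N.sem_padRight,
        s.truncate_sub1_padRight, s.truncate_sub2_padRight]
  | _, _, .nil, _ => rfl
  | _, _, .cons s1 s2 _ Mh Mt, η => by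
      simp only [Term.padRight, Term.sem, Mh.sem_padRight, Mt.sem_padRight,
        s2.truncate_sub1_padRight, s2.truncate_sub2_padRight, s1.truncate_sub2_padRight]
      rfl
  | _, _, .lrec s M N1 N2, η => by
      simp only [Term.padRight, Term.sem, M.sem_padRight, N1.sem_padRight,
        s.truncate_sub1_padRight, s.truncate_sub2_padRight]

theorem foldr_eq_iterate_of_comp_cons {α β : Type*} (φ : α → α)
    (step : β → (α → α) × List β → (α → α) × List β)
    (h : ∀ g m b, step b (g, m) = (g ∘ φ, b :: m)) (n : List β) :
    n.foldr step (id, []) = (φ^[n.length], n) := by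
  induction n with
  | nil => rfl
  | cons b n ih => rw [List.foldr_cons, ih, h, List.length_cons, Function.iterate_succ]

section Iteration

variable {A : Tp}

local notation "T" => Tp.tens A unitL
local notation "F" => Tp.arr T T
local notation "B" => Tp.tens F unitL

/-- `(h, m), a, d ↦ (λ p. h (f p), cons d a m)`. -/
def iterStep (f : Term [] F) : Term [some B, some .unit, some .dia] B :=
  .letp (.left (.right (.right .nil))) (.var .here)
    (.pair (.right (.left (.skip (.right (.right .nil)))))
      (.lam <| .app (.right (.skip (.left (.skip (.skip (.skip .nil))))))
        (.var (.there (.there .here)))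
        (.app (.right (.skip (.skip (.skip (.skip (.skip .nil))))))
          (f.padRight 6) (.var .here)))
      (.cons (.right (.skip (.skip (.right (.left .nil)))))
             (.right (.skip (.skip (.left (.skip .nil)))))
        (.var (.there (.there (.there (.there .here)))))
        (.var (.there (.there (.there .here))))
        (.var .here)))

/-- `λ (x, n). let (g, n') = lrec n (λ p. p, nil) iterStep in g (x, n')`. -/
def iterTerm (f : Term [] F) : Term [] F :=
  .lam <| .letp (.left .nil) (.var .here) <|
    .letp (.left (.right (.skip .nil)))
      (.lrec (.left (.skip (.skip .nil))) (.var .here)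
        (.pair (.skip (.skip (.skip .nil))) (.lam (.var .here)) .nil) (iterStep f))
      (.app (.right (.left (.skip (.right (.skip .nil)))))
        (.var (.there .here))
        (.pair (.right (.skip (.skip (.left (.skip .nil)))))
          (.var (.there (.there (.there .here))))
          (.var .here)))

theorem sem_iterStep (f : Term [] F) (g : Tp.sem F) (m : List Unit) (a : Unit) :
    (iterStep f).sem (((g, m), a, (), PUnit.unit) : CtxSem [some B, some .unit, some .dia])
      = (g ∘ f.sem PUnit.unit, a :: m) :=
  Prod.ext (funext fun p => congrArg g (congrFun (Term.sem_padRight 6 f PUnit.unit) p)) rfl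

theorem sem_iterTerm (f : Term [] F) (x : A.sem) (n : List Unit) :
    (iterTerm f).sem PUnit.unit (x, n) = (f.sem PUnit.unit)^[n.length] (x, n) :=
  congrArg (fun r => r.1 (x, r.2)) <| foldr_eq_iterate_of_comp_cons (f.sem PUnit.unit)
    (fun a b => (iterStep f).sem ((b, a, (), PUnit.unit) : CtxSem [some B, some .unit, some .dia]))
    (sem_iterStep f) n

end Iteration

/-- **Linear iteration in LFPL**: for every closed term
`f : (A ⊗ L(1)) ⊸ (A ⊗ L(1))` there is a closed term `f♯` of the same type
whose denotation iterates the denotation of `f` exactly `|n|` times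
starting from `(x, n)`. -/
theorem linear_iteration {A : Tp}
    (f : Term [] (.arr (.tens A unitL) (.tens A unitL))) :
    ∃ fs : Term [] (.arr (.tens A unitL) (.tens A unitL)),
      ∀ (x : A.sem) (n : List Unit),
        fs.sem PUnit.unit (x, n) = (f.sem PUnit.unit)^[n.length] (x, n) :=
  ⟨iterTerm f, sem_iterTerm f⟩
end

section
/- Polynomial iteration in LFPL: let f : (A ⊗ L(1)) ⊸ (A ⊗ L(1)) be a closed LFPL term and P : ℕ → ℕ a polynomial with natural-number coefficients. Then there exists a closed term f^{♯P} : (A ⊗ L(1)) ⊸ (A ⊗ L(1)) such that for all x ∈ ⟦A⟧ and n ∈ ⟦L(1)⟧, ⟦f^{♯P}⟧(x, n) = ⟦f⟧^{P(|n|)}(x, n). -/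
/-!
Call `g : ℕ → ℕ` an iteration count of `f` if some closed term maps `n : L(1)` to `n` together
with `⟦f⟧^{g |n|}`. Such counts contain `1` and are closed under addition (compose the two
iterates) and under prefix sums `k ↦ ∑_{i<k} g i`: recurse over `n`, rebuilding a copy `t` of
the list with the diamonds it releases, and compose with the `g |t|`-fold iterate at each step.
Since `∑_{i<k} ∑_{m≤j} C(j+1, m) i^m = k^{j+1}`, all monomials, and hence all polynomials with
natural coefficients, are iteration counts.
-/

theorem sum_range_sum_range_choose_mul_pow (j k : ℕ) :
    ∑ i ∈ Finset.range k, ∑ m ∈ Finset.range (j + 1), (j + 1).choose m * i ^ m = k ^ (j + 1) := by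
  induction k with
  | zero => simp
  | succ k ih =>
    have binomial : (k + 1) ^ (j + 1) =
        ∑ m ∈ Finset.range (j + 1), (j + 1).choose m * k ^ m + k ^ (j + 1) := by
      simp [add_pow, Finset.sum_range_succ (n := j + 1), mul_comm]
    rw [Finset.sum_range_succ, ih, binomial, add_comm]

theorem foldr_seq_eq_iterate_sum {α : Type*} (F : α → α) (g : ℕ → ℕ)
    (G : List Unit → List Unit × (α → α)) (hG : ∀ t, G t = (t, F^[g t.length]))
    (n : List Unit) :
    n.foldr (fun _ p => (() :: (G p.1).1, (G p.1).2 ∘ p.2)) ([], id) =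
      (n, F^[∑ i ∈ Finset.range n.length, g i]) := by
  induction n with
  | nil => rfl
  | cons u t ih =>
    rw [List.foldr_cons, ih, hG, List.length_cons, Finset.sum_range_succ, add_comm,
      Function.iterate_add]

-- Closed terms are weakened one slot at a time at the *end* of the context: this commutes with
-- binders, which extend the context at the front.
def Lk.weakenLast : {G : Ctx} → {A : Tp} → Lk G A → (o : Option Tp) → Lk (G ++ [o]) A
  | _, _, .here, _ => .here
  | _, _, .there l, o => .there (l.weakenLast o)

def Split.weakenLast : {G G1 G2 : Ctx} → Split G G1 G2 → (o : Option Tp) →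
    Split (G ++ [o]) (G1 ++ [o]) (G2 ++ [none])
  | _, _, _, .nil, some _ => .left .nil
  | _, _, _, .nil, none => .skip .nil
  | _, _, _, .skip s, o => .skip (s.weakenLast o)
  | _, _, _, .left s, o => .left (s.weakenLast o)
  | _, _, _, .right s, o => .right (s.weakenLast o)

def Term.weakenLast : {G : Ctx} → {C : Tp} → Term G C → (o : Option Tp) → Term (G ++ [o]) C
  | _, _, .var l, o => .var (l.weakenLast o)
  | _, _, .null, _ => .null
  | _, _, .inj1 M, o => .inj1 (M.weakenLast o)
  | _, _, .inj2 M, o => .inj2 (M.weakenLast o)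
  | _, _, .scase s M N1 N2, o =>
      .scase (s.weakenLast o) (M.weakenLast o) (N1.weakenLast none) (N2.weakenLast none)
  | _, _, .pair s M1 M2, o => .pair (s.weakenLast o) (M1.weakenLast o) (M2.weakenLast none)
  | _, _, .letp s M N, o => .letp (s.weakenLast o) (M.weakenLast o) (N.weakenLast none)
  | _, _, .lam M, o => .lam (M.weakenLast o)
  | _, _, .app s M N, o => .app (s.weakenLast o) (M.weakenLast o) (N.weakenLast none)
  | _, _, .nil, _ => .nil
  | _, _, .cons s1 s2 Md Mh Mt, o =>
      .cons (s1.weakenLast o) (s2.weakenLast none) (Md.weakenLast o) (Mh.weakenLast none)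
        (Mt.weakenLast none)
  | _, _, .lrec s M N1 N2, o => .lrec (s.weakenLast o) (M.weakenLast o) (N1.weakenLast none) N2

def CtxSem.dropLast : (G : Ctx) → (o : Option Tp) → CtxSem (G ++ [o]) → CtxSem G
  | [], _, _ => PUnit.unit
  | some _ :: G, o, η => (η.1, dropLast G o η.2)
  | none :: G, o, η => dropLast G o η

theorem Lk.sem_weakenLast : {G : Ctx} → {A : Tp} → (l : Lk G A) → (o : Option Tp) →
    (η : CtxSem (G ++ [o])) → (l.weakenLast o).sem η = l.sem (CtxSem.dropLast G o η)
  | _, _, .here, _, _ => rfl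
  | some _ :: _, _, .there l, o, η => l.sem_weakenLast o η.2
  | none :: _, _, .there l, o, η => l.sem_weakenLast o η

theorem Split.sub1_weakenLast : {G G1 G2 : Ctx} → (s : Split G G1 G2) → (o : Option Tp) →
    (η : CtxSem (G ++ [o])) →
    CtxSem.dropLast G1 o ((s.weakenLast o).sub1 η) = s.sub1 (CtxSem.dropLast G o η)
  | _, _, _, .nil, some _, _ => rfl
  | _, _, _, .nil, none, _ => rfl
  | none :: _, _, _, .skip s, o, η => s.sub1_weakenLast o η
  | some _ :: _, _, _, .left s, o, η => congrArg (Prod.mk η.1) (s.sub1_weakenLast o η.2)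
  | some _ :: _, _, _, .right s, o, η => s.sub1_weakenLast o η.2

theorem Split.sub2_weakenLast : {G G1 G2 : Ctx} → (s : Split G G1 G2) → (o : Option Tp) →
    (η : CtxSem (G ++ [o])) →
    CtxSem.dropLast G2 none ((s.weakenLast o).sub2 η) = s.sub2 (CtxSem.dropLast G o η)
  | _, _, _, .nil, some _, _ => rfl
  | _, _, _, .nil, none, _ => rfl
  | none :: _, _, _, .skip s, o, η => s.sub2_weakenLast o η
  | some _ :: _, _, _, .left s, o, η => s.sub2_weakenLast o η.2
  | some _ :: _, _, _, .right s, o, η => congrArg (Prod.mk η.1) (s.sub2_weakenLast o η.2)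

theorem Term.sem_weakenLast : {G : Ctx} → {C : Tp} → (M : Term G C) → (o : Option Tp) →
    (η : CtxSem (G ++ [o])) → (M.weakenLast o).sem η = M.sem (CtxSem.dropLast G o η)
  | _, _, .var l, o, η => l.sem_weakenLast o η
  | _, _, .null, _, _ => rfl
  | _, _, .inj1 M, o, η => congrArg Sum.inl (M.sem_weakenLast o η)
  | _, _, .inj2 M, o, η => congrArg Sum.inr (M.sem_weakenLast o η)
  | _, _, .scase s M N1 N2, o, η => by
      simp only [Term.weakenLast, Term.sem, M.sem_weakenLast, ← s.sub1_weakenLast o η,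
        ← s.sub2_weakenLast o η]
      split <;> exact Term.sem_weakenLast _ none _
  | _, _, .pair s M1 M2, o, η => by
      simp only [Term.weakenLast, Term.sem, M1.sem_weakenLast, M2.sem_weakenLast,
        s.sub1_weakenLast, s.sub2_weakenLast]
      rfl
  | _, _, .letp s M N, o, η => by
      simp only [Term.weakenLast, Term.sem, M.sem_weakenLast, s.sub1_weakenLast]
      exact (N.sem_weakenLast none _).trans
        (congrArg (fun e => N.sem (_, _, e)) (s.sub2_weakenLast o η))
  | _, _, .lam M, o, η => funext fun a => M.sem_weakenLast o (a, η)
  | _, _, .app s M N, o, η => by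
      simp only [Term.weakenLast, Term.sem, M.sem_weakenLast, N.sem_weakenLast,
        s.sub1_weakenLast, s.sub2_weakenLast]
  | _, _, .nil, _, _ => rfl
  | _, _, .cons s1 s2 Md Mh Mt, o, η => by
      simp only [Term.weakenLast, Term.sem, Mh.sem_weakenLast, Mt.sem_weakenLast,
        s2.sub1_weakenLast, s2.sub2_weakenLast, s1.sub2_weakenLast]
      rfl
  | _, _, .lrec s M N1 N2, o, η => by
      simp only [Term.weakenLast, Term.sem, M.sem_weakenLast, N1.sem_weakenLast,
        s.sub1_weakenLast, s.sub2_weakenLast]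

theorem Term.exists_weaken_closed {C : Tp} (M : Term [] C) (G : Ctx) :
    ∃ N : Term G C, N.sem = fun _ => M.sem PUnit.unit := by
  induction G using List.reverseRecOn with
  | nil => exact ⟨M, rfl⟩
  | append_singleton G o ih =>
      obtain ⟨N, hN⟩ := ih
      exact ⟨N.weakenLast o, funext fun η => by rw [Term.sem_weakenLast, hN]⟩

abbrev Tp.endo (A : Tp) : Tp := .arr (.tens A unitL) (.tens A unitL)

section Programs

variable {B : Tp}

-- `λ n. let ⟨n, h₁⟩ = G₁ n in let ⟨n, h₂⟩ = G₂ n in ⟨n, λ z. h₂ (h₁ z)⟩`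
theorem Term.exists_seq (G₁ G₂ : Term [] (.arr unitL (.tens unitL (.arr B B)))) :
    ∃ G : Term [] (.arr unitL (.tens unitL (.arr B B))), ∀ n : List Unit,
      G.sem PUnit.unit n =
        ((G₂.sem PUnit.unit (G₁.sem PUnit.unit n).1).1,
          (G₂.sem PUnit.unit (G₁.sem PUnit.unit n).1).2 ∘ (G₁.sem PUnit.unit n).2) := by
  obtain ⟨W₁, hW₁⟩ := G₁.exists_weaken_closed [none]
  obtain ⟨W₂, hW₂⟩ := G₂.exists_weaken_closed [none, none, none]
  refine ⟨.lam (.letp (.left .nil) (.app (.right .nil) W₁ (.var .here))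
    (.letp (.right (.left (.skip .nil)))
      (.app (.skip (.right (.skip .nil))) W₂ (.var (.there .here)))
      (.pair (.right (.left (.right (.skip (.skip .nil)))))
        (.var (.there .here))
        (.lam (.app (.right (.left (.skip (.right (.skip (.skip .nil))))))
          (.var (.there .here))
          (.app (.right (.skip (.skip (.left (.skip (.skip .nil))))))
            (.var (.there (.there (.there .here)))) (.var .here))))))), fun n => ?_⟩
  simp only [Term.sem, Split.sub1, Split.sub2, hW₁, hW₂]
  rfl

-- `λ n. lrec n ⟨[], λ z. z⟩ (λ ⟨t, h⟩ _ d. let ⟨t, h'⟩ = G t in ⟨cons d () t, λ z. h' (h z)⟩)`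
theorem Term.exists_foldr_seq (G : Term [] (.arr unitL (.tens unitL (.arr B B)))) :
    ∃ H : Term [] (.arr unitL (.tens unitL (.arr B B))), ∀ n : List Unit,
      H.sem PUnit.unit n =
        n.foldr (fun _ (p : List Unit × (B.sem → B.sem)) =>
          (() :: (G.sem PUnit.unit p.1).1, (G.sem PUnit.unit p.1).2 ∘ p.2)) ([], id) := by
  obtain ⟨W, hW⟩ := G.exists_weaken_closed [none, none, none, none, none]
  refine ⟨.lam (.lrec (.left .nil) (.var .here) (.pair (.skip .nil) .nil (.lam (.var .here)))
    (.letp (.left (.right (.right .nil))) (.var .here)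
      (.letp (.right (.left (.skip (.right (.right .nil)))))
        (.app (.skip (.right (.skip (.skip (.skip .nil))))) W (.var (.there .here)))
        (.pair (.right (.left (.right (.skip (.skip (.right (.left .nil)))))))
          (.cons (.skip (.right (.skip (.skip (.skip (.skip (.left .nil)))))))
            (.skip (.right (.skip (.skip (.skip (.skip (.skip .nil)))))))
            (.var (.there (.there (.there (.there (.there (.there .here)))))))
            .null
            (.var (.there .here)))
          (.lam (.app (.right (.left (.skip (.right (.skip (.skip (.right (.skip .nil))))))))
            (.var (.there .here))
            (.app (.right (.skip (.skip (.left (.skip (.skip (.right (.skip .nil))))))))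
              (.var (.there (.there (.there .here)))) (.var .here)))))))), fun n => ?_⟩
  simp only [Term.sem, Split.sub1, Split.sub2, hW]
  rfl

-- `λ ⟨x, n⟩. let ⟨n, h⟩ = G n in h ⟨x, n⟩`
theorem Term.exists_apply_snd_to_fst {A : Tp} (G : Term [] (.arr unitL (.tens unitL A.endo))) :
    ∃ T : Term [] A.endo, ∀ (x : A.sem) (n : List Unit),
      T.sem PUnit.unit (x, n) = (G.sem PUnit.unit n).2 (x, (G.sem PUnit.unit n).1) := by
  obtain ⟨W, hW⟩ := G.exists_weaken_closed [none, none, none]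
  refine ⟨.lam (.letp (.left .nil) (.var .here)
    (.letp (.left (.right (.skip .nil)))
      (.app (.right (.skip (.skip .nil))) W (.var .here))
      (.app (.left (.right (.skip (.right (.skip .nil)))))
        (.var .here)
        (.pair (.skip (.right (.skip (.left (.skip .nil)))))
          (.var (.there (.there (.there .here))))
          (.var (.there .here)))))), fun x n => ?_⟩
  simp only [Term.sem, Split.sub1, Split.sub2, hW]
  rfl

end Programs

-- The list is returned because, the language being affine, `n` cannot be used twice.
def iterationCounts {A : Tp} (f : Term [] A.endo) : AddSubmonoid (ℕ → ℕ) where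
  carrier := {g | ∃ G : Term [] (.arr unitL (.tens unitL A.endo)),
    ∀ n : List Unit, G.sem PUnit.unit n = (n, (f.sem PUnit.unit)^[g n.length])}
  zero_mem' := ⟨.lam (.pair (.left .nil) (.var .here) (.lam (.var .here))), fun _ => rfl⟩
  add_mem' := by
    rintro g₁ g₂ ⟨G₁, hG₁⟩ ⟨G₂, hG₂⟩
    obtain ⟨G, hG⟩ := Term.exists_seq G₁ G₂
    refine ⟨G, fun n => ?_⟩
    rw [hG, hG₁, hG₂, Pi.add_apply, add_comm]
    exact Prod.ext rfl (Function.iterate_add _ _ _).symm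

namespace iterationCounts

variable {A : Tp} (f : Term [] A.endo)

theorem one_mem : (fun _ => 1) ∈ iterationCounts f := by
  obtain ⟨W, hW⟩ := f.exists_weaken_closed [none]
  refine ⟨.lam (.pair (.left .nil) (.var .here) W), fun n => ?_⟩
  simp only [Term.sem, Split.sub1, Split.sub2, hW]
  rfl

theorem sum_range_mem {g : ℕ → ℕ} (hg : g ∈ iterationCounts f) :
    (fun k => ∑ i ∈ Finset.range k, g i) ∈ iterationCounts f := by
  obtain ⟨G, hG⟩ := hg
  obtain ⟨H, hH⟩ := Term.exists_foldr_seq G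
  exact ⟨H, fun n => (hH n).trans (foldr_seq_eq_iterate_sum _ g _ hG n)⟩

theorem sum_mul_pow_mem (c : ℕ → ℕ) (d : ℕ)
    (hpow : ∀ m < d, (fun k => k ^ m) ∈ iterationCounts f) :
    (fun k => ∑ m ∈ Finset.range d, c m * k ^ m) ∈ iterationCounts f := by
  have := AddSubmonoid.sum_mem _ fun m hm =>
    AddSubmonoid.nsmul_mem _ (hpow m (Finset.mem_range.mp hm)) (c m)
  simpa only [Finset.sum_fn, Pi.smul_def, smul_eq_mul] using this

theorem pow_mem (j : ℕ) : (fun k => k ^ j) ∈ iterationCounts f := by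
  induction j using Nat.strong_induction_on with
  | _ j ih =>
    rcases j with _ | j
    · simpa only [pow_zero] using one_mem f
    · simpa only [sum_range_sum_range_choose_mul_pow] using
        sum_range_mem f (sum_mul_pow_mem f (j + 1).choose (j + 1) ih)

theorem eval_mem (P : Polynomial ℕ) : (fun k => P.eval k) ∈ iterationCounts f := by
  simpa only [Polynomial.eval_eq_sum_range] using
    sum_mul_pow_mem f P.coeff _ fun m _ => pow_mem f m

end iterationCounts

/-- **Polynomial iteration in LFPL**: for every closed term
`f : (A ⊗ L(1)) ⊸ (A ⊗ L(1))` and polynomial `P : ℕ → ℕ` with natural-number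
coefficients there is a closed term `f♯P` of the same type whose denotation
iterates the denotation of `f` exactly `P(|n|)` times starting from `(x, n)`. -/
theorem polynomial_iteration {A : Tp}
    (f : Term [] (.arr (.tens A unitL) (.tens A unitL))) (P : Polynomial ℕ) :
    ∃ fsP : Term [] (.arr (.tens A unitL) (.tens A unitL)),
      ∀ (x : A.sem) (n : List Unit),
        fsP.sem PUnit.unit (x, n) = (f.sem PUnit.unit)^[P.eval n.length] (x, n) := by
  obtain ⟨G, hG⟩ := iterationCounts.eval_mem f P
  obtain ⟨T, hT⟩ := Term.exists_apply_snd_to_fst G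
  exact ⟨T, fun x n => by rw [hT, hG]⟩
end

section
/- Definability of elements of diamond-free types: suppose A is a diamond-free LFPL type. Then for every element a ∈ ⟦A⟧ there exists a closed LFPL term M_a : A such that ⟦M_a⟧ under the empty environment equals a. -/
/-- **Definability of elements of diamond-free types**: if `A` is diamond-free,
then every element `a ∈ ⟦A⟧` is the denotation of some closed term `M_a : A`. -/
theorem dfree_element_definable {A : Tp} (hA : DFree A) (a : A.sem) :
    ∃ M : Term [] A, M.sem PUnit.unit = a := by
  induction hA with
  | unit => exact ⟨.null, rfl⟩
  | sum _ _ ih₁ ih₂ =>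
    rcases a with a | b
    · obtain ⟨M, rfl⟩ := ih₁ a
      exact ⟨.inj1 M, rfl⟩
    · obtain ⟨M, rfl⟩ := ih₂ b
      exact ⟨.inj2 M, rfl⟩
  | tens _ _ ih₁ ih₂ =>
    obtain ⟨M₁, hM₁⟩ := ih₁ a.1
    obtain ⟨M₂, hM₂⟩ := ih₂ a.2
    exact ⟨.pair .nil M₁ M₂, Prod.ext hM₁ hM₂⟩
end

section
/- Definability of functions out of diamond-free types: suppose A and B are LFPL types such that A is diamond-free and every element b ∈ ⟦B⟧ is definable by a closed term M_b : B with ⟦M_b⟧ = b. Then for every function f : ⟦A⟧ → ⟦B⟧ there exists a closed LFPL term M_f : A ⊸ B such that ⟦M_f⟧ under the empty environment equals f. -/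
/-! A function out of a diamond-free type is a constant (on `1`), a `Sum.elim` of two
functions (on `A + B`) or the uncurrying of a curried function (on `A ⊗ B`). Each of these
is a closed combinator applied to closed terms, so definability propagates along the
induction on diamond-freeness without ever weakening an open term. -/

def Definable {A : Tp} (a : A.sem) : Prop :=
  ∃ M : Term [] A, M.sem PUnit.unit = a

theorem Definable.app {A B : Tp} {f : (Tp.arr A B).sem} {a : A.sem}
    (hf : Definable f) (ha : Definable a) : Definable (f a) := by
  obtain ⟨M, rfl⟩ := hf
  obtain ⟨N, rfl⟩ := ha
  exact ⟨.app .nil M N, rfl⟩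

namespace Term

def const {A B : Tp} : Term [] (.arr B (.arr A B)) :=
  .lam (.lam (.var (.there .here)))

theorem const_sem {A B : Tp} :
    (const (A := A) (B := B)).sem PUnit.unit = fun b _ => b := rfl

def sumElim {A₁ A₂ B : Tp} :
    Term [] (.arr (.arr A₁ B) (.arr (.arr A₂ B) (.arr (.sum A₁ A₂) B))) :=
  .lam (.lam (.lam
    (.scase (.left (.right (.right .nil))) (.var .here)
      (.app (.right (.skip (.left (.left .nil)))) (.var (.there (.there (.there .here))))
        (.var .here))
      (.app (.right (.skip (.left (.left .nil)))) (.var (.there (.there .here)))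
        (.var .here)))))

theorem sumElim_sem {A₁ A₂ B : Tp} :
    (sumElim (A₁ := A₁) (A₂ := A₂) (B := B)).sem PUnit.unit = Sum.elim := by
  funext g h x
  cases x <;> rfl

def uncurry {A₁ A₂ B : Tp} :
    Term [] (.arr (.arr A₁ (.arr A₂ B)) (.arr (.tens A₁ A₂) B)) :=
  .lam (.lam
    (.letp (.left (.right .nil)) (.var .here)
      (.app (.right (.left (.skip (.left .nil))))
        (.app (.skip (.right (.skip (.left .nil)))) (.var (.there (.there (.there .here))))
          (.var (.there .here)))
        (.var .here))))

theorem uncurry_sem {A₁ A₂ B : Tp} :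
    (uncurry (A₁ := A₁) (A₂ := A₂) (B := B)).sem PUnit.unit = Function.uncurry := by
  funext g p
  rfl

end Term

theorem DFree.definable_fun {A : Tp} (hA : DFree A) {B : Tp}
    (hB : ∀ b : B.sem, Definable b) (f : A.sem → B.sem) : Definable (A := .arr A B) f := by
  induction hA generalizing B with
  -- `fun _ => f ()` is `f` by eta for `Unit`
  | unit => exact Definable.app ⟨.const, Term.const_sem⟩ (hB (f ()))
  | sum _ _ ih₁ ih₂ =>
    have hcase := (Definable.app ⟨.sumElim, Term.sumElim_sem⟩ (ih₁ hB (f ∘ Sum.inl))).app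
      (ih₂ hB (f ∘ Sum.inr))
    exact (Sum.elim_comp_inl_inr f ▸ hcase :)
  | @tens _ A₂ _ _ ih₁ ih₂ =>
    have hcurry := ih₁ (B := .arr A₂ B) (ih₂ hB) (Function.curry f)
    exact (Function.uncurry_curry f ▸ Definable.app ⟨.uncurry, Term.uncurry_sem⟩ hcurry :)

/-- **Definability of functions out of diamond-free types**: if `A` is
diamond-free and every element of `⟦B⟧` is definable by a closed term of type
`B`, then every function `f : ⟦A⟧ → ⟦B⟧` is the denotation of some closed term
`M_f : A ⊸ B`. -/
theorem dfree_function_definable {A B : Tp} (hA : DFree A)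
    (hB : ∀ b : B.sem, ∃ Mb : Term [] B, Mb.sem PUnit.unit = b)
    (f : A.sem → B.sem) :
    ∃ Mf : Term [] (.arr A B), Mf.sem PUnit.unit = f :=
  hA.definable_fun hB f
end
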